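/- arXiv:0902.0257 — 2 statements merged into one kernel-verified Lean document; each statement's English description precedes it below -/
import Mathlib

section
/- Let v(x,t) be defined for x ∈ [0,∞) and t ∈ (0,T), four times continuously differentiable in x, and suppose that for all t ∈ (0,T): v(0,t) = 0, v_x(0,t) ≥ 0, v_{xx}(0,t) ≥ 0, and v_x(0,t) + v_{xxx}(0,t) ≥ c for some constant c > 0 independent of t. Then there exist L₀ > 0, λ > 6, and a > 0 such that B₀(v)(t) − C_λ(L₀) ≥ a² for all t ∈ (0,T), i.e., the hypotheses of the tangent-type blow-up theorem (Theorem 3.1 of the paper) are fulfilled with L = L₀. -/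
open MeasureTheory Set

/-- `n`-th spatial derivative of `v` at `(x, t)`. -/
noncomputable def dxn (v : ℝ → ℝ → ℝ) (n : ℕ) (x t : ℝ) : ℝ :=
  iteratedDeriv n (fun y => v y t) x

/-- The boundary functional `B₀(v)(t)` (evaluated at `x = 0`). -/
noncomputable def B0 (L lam : ℝ) (v : ℝ → ℝ → ℝ) (t : ℝ) : ℝ :=
  -(1 / 2) * L ^ lam * (v 0 t) ^ 2
    + lam * (lam - 1) * (lam - 2) * L ^ (lam - 3) * v 0 t
    + L ^ lam * (1 + lam * (lam - 1) * L ^ (-2 : ℝ)) * dxn v 1 0 t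
    + lam * L ^ (lam - 1) * dxn v 2 0 t
    + L ^ lam * dxn v 3 0 t

/-- The constant `C_λ(L)`. -/
noncomputable def Clam (L lam : ℝ) : ℝ :=
  lam * (lam - 1) * L ^ (lam - 6) *
    ((lam - 2) ^ 2 * (lam - 3) ^ 2 / (lam - 6)
      + 2 * (lam - 2) * (lam - 3) * L ^ (2 : ℕ) / (lam - 4)
      + L ^ (4 : ℕ) / (lam - 2))

/-- The constant `κ = (λ(λ+2)/4 · L^{-(λ+2)})^{1/2}`. -/
noncomputable def kseKappa (L lam : ℝ) : ℝ :=
  Real.sqrt (lam * (lam + 2) / 4 * L ^ (-(lam + 2)))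

/-- The weighted moment `J(t) = ∫_0^L v(x,t) |x-L|^λ dx`. -/
noncomputable def kseJ (L lam : ℝ) (v : ℝ → ℝ → ℝ) (t : ℝ) : ℝ :=
  ∫ x in (0:ℝ)..L, v x t * |x - L| ^ lam

/-- **Sufficient boundary conditions for blow-up.**
If `v(0,t) = 0`, `v_x(0,t) ≥ 0`, `v_xx(0,t) ≥ 0` and `v_x(0,t) + v_xxx(0,t) ≥ c > 0`
for all `t ∈ (0,T)`, then there are `L₀ > 0`, `λ > 6` and `a > 0` such that
`B₀(v)(t) - C_λ(L₀) ≥ a²` for all `t ∈ (0,T)`, i.e. the hypotheses of the tangent-type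
blow-up theorem are fulfilled with `L = L₀`. -/
theorem kse_blowup_hypotheses_fulfilled
    (T c : ℝ) (hT : 0 < T) (hc : 0 < c) (v : ℝ → ℝ → ℝ)
    (hx : ∀ t ∈ Ioo 0 T, ContDiffOn ℝ 4 (fun y => v y t) (Ici 0))
    (h0 : ∀ t ∈ Ioo 0 T, v 0 t = 0)
    (h1 : ∀ t ∈ Ioo 0 T, 0 ≤ dxn v 1 0 t)
    (h2 : ∀ t ∈ Ioo 0 T, 0 ≤ dxn v 2 0 t)
    (h13 : ∀ t ∈ Ioo 0 T, c ≤ dxn v 1 0 t + dxn v 3 0 t) :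
    ∃ L0 > (0:ℝ), ∃ lam > (6:ℝ), ∃ a > (0:ℝ), ∀ t ∈ Ioo 0 T,
      B0 L0 lam v t - Clam L0 lam ≥ a ^ 2 := by
  refine ⟨max 1 (Real.sqrt (17389 / c)),
    lt_of_lt_of_le one_pos (le_max_left _ _), 7, by norm_num, 1, one_pos, ?_⟩
  set L := max 1 (Real.sqrt (17389 / c)) with hLdef
  have hL1 : (1:ℝ) ≤ L := le_max_left _ _
  have hLpos : (0:ℝ) < L := lt_of_lt_of_le one_pos hL1
  have hL2 : 17389 / c ≤ L ^ 2 := by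
    calc 17389 / c = Real.sqrt (17389 / c) ^ 2 :=
          (Real.sq_sqrt (le_of_lt (div_pos (by norm_num) hc))).symm
      _ ≤ L ^ 2 := by
          apply pow_le_pow_left₀ (Real.sqrt_nonneg _) (le_max_right _ _)
  have hcL : (17389:ℝ) ≤ c * L ^ 2 := by
    rw [div_le_iff₀ hc] at hL2; linarith
  intro t ht
  have h0t := h0 t ht
  have h1t := h1 t ht
  have h2t := h2 t ht
  have h13t := h13 t ht
  have e7 : L ^ (7:ℝ) = L ^ (7:ℕ) := by
    rw [← Real.rpow_natCast L 7]; norm_num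
  have e6 : L ^ ((7:ℝ) - 1) = L ^ (6:ℕ) := by
    rw [← Real.rpow_natCast L 6]; norm_num
  have e4 : L ^ ((7:ℝ) - 3) = L ^ (4:ℕ) := by
    rw [← Real.rpow_natCast L 4]; norm_num
  have e1 : L ^ ((7:ℝ) - 6) = L ^ (1:ℕ) := by
    rw [← Real.rpow_natCast L 1]; norm_num
  have e5 : L ^ (7:ℝ) * L ^ (-2:ℝ) = L ^ (5:ℕ) := by
    rw [← Real.rpow_add hLpos, ← Real.rpow_natCast L 5]; norm_num
  have hL15 : L ^ (1:ℕ) ≤ L ^ (5:ℕ) := pow_le_pow_right₀ hL1 (by norm_num)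
  have hL35 : L ^ (3:ℕ) ≤ L ^ (5:ℕ) := pow_le_pow_right₀ hL1 (by norm_num)
  have hL5 : (1:ℝ) ≤ L ^ (5:ℕ) := one_le_pow₀ hL1
  have hkey : 17389 * L ^ (5:ℕ) ≤ (c * L ^ 2) * L ^ (5:ℕ) :=
    mul_le_mul_of_nonneg_right hcL (pow_nonneg hLpos.le 5)
  have hprod : c * L ^ (7:ℕ) ≤ (dxn v 1 0 t + dxn v 3 0 t) * L ^ (7:ℕ) :=
    mul_le_mul_of_nonneg_right h13t (pow_nonneg hLpos.le 7)
  have h42 : 0 ≤ 42 * L ^ (5:ℕ) * dxn v 1 0 t := by positivity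
  have h7 : 0 ≤ 7 * L ^ (6:ℕ) * dxn v 2 0 t := by positivity
  unfold B0 Clam
  rw [h0t]
  rw [show (1:ℝ) + 7 * (7 - 1) * L ^ (-2:ℝ) = 1 + 42 * L ^ (-2:ℝ) by ring]
  have expand : L ^ (7:ℝ) * (1 + 42 * L ^ (-2:ℝ)) * dxn v 1 0 t
      = (L ^ (7:ℕ) + 42 * L ^ (5:ℕ)) * dxn v 1 0 t := by
    have e5' : L ^ (7:ℝ) * (42 * L ^ (-2:ℝ)) = 42 * L ^ (5:ℕ) := by
      rw [show L ^ (7:ℝ) * (42 * L ^ (-2:ℝ)) = 42 * (L ^ (7:ℝ) * L ^ (-2:ℝ)) from by ring, e5]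
    rw [mul_add, mul_one, e5', e7]
  rw [expand, e7, e6, e1]
  ring_nf
  nlinarith [hkey, hprod, h42, h7, hL15, hL35, hL5, hLpos,
    mul_pos hLpos (pow_pos hLpos 4)]
end

section
/- (Singular-kernel Gronwall inequality of Henry type.) Let T > 0, C ≥ 0, γ ≥ 0, and β ∈ (0,1). Suppose V : [0,T] → [0,∞) is continuous and satisfies, for all t ∈ [0,T], V(t) ≤ C + C ∫_0^t (t−s)^{−1/2} V(s) ds + C ∫_0^t e^{γ s} (t−s)^{β−1} V(s) ds. Then there exists a constant M, depending only on C, γ, β, and T (and not on V), such that V(t) ≤ M for all t ∈ [0,T]. -/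
open MeasureTheory Set Filter intervalIntegral

lemma ker_ii {t r : ℝ} (hr : -1 < r) (u v : ℝ) :
    IntervalIntegrable (fun s => (t - s) ^ r) volume u v := by
  simpa using (intervalIntegrable_rpow' hr (a := t - u) (b := t - v)).comp_sub_left t

lemma full_ii {t r : ℝ} (hr : -1 < r) {g : ℝ → ℝ}
    (hg : ContinuousOn g (Icc 0 t)) {u v : ℝ} (hu : 0 ≤ u) (huv : u ≤ v) (hv : v ≤ t) :
    IntervalIntegrable (fun s => (t - s) ^ r * g s) volume u v :=
  (ker_ii hr u v).mul_continuousOn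
    (hg.mono (by rw [uIcc_of_le huv]; exact Icc_subset_Icc hu (hv)))

lemma ker_int {t r a : ℝ} (hr : -1 < r) (hrz : r ≠ -1) (hat : a ≤ t) :
    (∫ s in a..t, (t - s) ^ r) = (t - a) ^ (r + 1) / (r + 1) := by
  have h1 : (∫ s in a..t, (t - s) ^ r) = ∫ x in t - t..t - a, x ^ r :=
    integral_comp_sub_left (fun x => x ^ r) t
  rw [h1, sub_self, integral_rpow (Or.inl hr), Real.zero_rpow (by intro h; apply hrz; linarith),
    sub_zero]

lemma kernel_est {t r δ T b Mk : ℝ} (hr1 : -1 < r) (hr0 : r < 0)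
    (hδ : 0 < δ) (ht0 : 0 ≤ t) (htT : t ≤ T)
    {g : ℝ → ℝ} (hg : ContinuousOn g (Icc 0 t))
    (hg0 : ∀ s ∈ Icc 0 t, 0 ≤ g s)
    (hfar : ∀ s ∈ Icc 0 (max (t - δ) 0), g s ≤ Mk)
    (hnear : ∀ s ∈ Icc 0 t, g s ≤ b)
    (hMk : 0 ≤ Mk) :
    (∫ s in (0:ℝ)..t, (t - s) ^ r * g s) ≤ δ ^ r * Mk * T + b * (δ ^ (r + 1) / (r + 1)) := by
  set a := max (t - δ) 0 with ha
  have ha0 : 0 ≤ a := le_max_right _ _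
  have hat : a ≤ t := max_le (by linarith) ht0
  have hta : t - a ≤ δ := by have : t - δ ≤ a := le_max_left _ _; linarith
  have hb : 0 ≤ b := le_trans (hg0 0 ⟨le_rfl, ht0⟩) (hnear 0 ⟨le_rfl, ht0⟩)
  have I1 : IntervalIntegrable (fun s => (t - s) ^ r * g s) volume 0 a :=
    full_ii hr1 hg le_rfl ha0 hat
  have I2 : IntervalIntegrable (fun s => (t - s) ^ r * g s) volume a t :=
    full_ii hr1 hg ha0 hat le_rfl
  have hsplit : (∫ s in (0:ℝ)..t, (t - s) ^ r * g s)
      = (∫ s in (0:ℝ)..a, (t - s) ^ r * g s) + ∫ s in a..t, (t - s) ^ r * g s :=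
    (integral_add_adjacent_intervals I1 I2).symm
  have hfarB : (∫ s in (0:ℝ)..a, (t - s) ^ r * g s) ≤ δ ^ r * Mk * T := by
    rcases eq_or_lt_of_le ha0 with h0 | h0
    · rw [← h0, integral_same]
      have : (0:ℝ) ≤ δ ^ r := Real.rpow_nonneg hδ.le r
      have hT0 : 0 ≤ T := le_trans ht0 htT
      positivity
    · have haeq : a = t - δ := by
        rcases le_or_gt (t - δ) 0 with h | h
        · rw [ha, max_eq_right h] at h0; exact absurd h0 (lt_irrefl 0)
        · rw [ha, max_eq_left h.le]
      have hpt : ∀ s ∈ Icc (0:ℝ) a, (t - s) ^ r * g s ≤ δ ^ r * Mk := by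
        intro s hs
        have hts : δ ≤ t - s := by
          have := hs.2; rw [haeq] at this; linarith
        exact mul_le_mul (Real.rpow_le_rpow_of_nonpos hδ hts hr0.le)
          (hfar s hs) (hg0 s ⟨hs.1, hs.2.trans hat⟩) (Real.rpow_nonneg hδ.le r)
      calc (∫ s in (0:ℝ)..a, (t - s) ^ r * g s)
          ≤ ∫ _ in (0:ℝ)..a, δ ^ r * Mk :=
            integral_mono_on ha0 I1 intervalIntegrable_const hpt
        _ = a * (δ ^ r * Mk) := by rw [intervalIntegral.integral_const]; simp [smul_eq_mul]
        _ ≤ T * (δ ^ r * Mk) := by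
            apply mul_le_mul_of_nonneg_right (by linarith)
            exact mul_nonneg (Real.rpow_nonneg hδ.le r) hMk
        _ = δ ^ r * Mk * T := by ring
  have hnearB : (∫ s in a..t, (t - s) ^ r * g s) ≤ b * (δ ^ (r + 1) / (r + 1)) := by
    have hpt : ∀ s ∈ Icc a t, (t - s) ^ r * g s ≤ (t - s) ^ r * b := fun s hs =>
      mul_le_mul_of_nonneg_left (hnear s ⟨ha0.trans hs.1, hs.2⟩)
        (Real.rpow_nonneg (by linarith [hs.2]) r)
    have IK : IntervalIntegrable (fun s => (t - s) ^ r * b) volume a t :=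
      (ker_ii hr1 a t).mul_const b
    calc (∫ s in a..t, (t - s) ^ r * g s)
        ≤ ∫ s in a..t, (t - s) ^ r * b := integral_mono_on hat I2 IK hpt
      _ = (∫ s in a..t, (t - s) ^ r) * b := by rw [intervalIntegral.integral_mul_const]
      _ = ((t - a) ^ (r + 1) / (r + 1)) * b := by
          rw [ker_int hr1 (by linarith) hat]
      _ ≤ (δ ^ (r + 1) / (r + 1)) * b := by
          exact mul_le_mul_of_nonneg_right
            (div_le_div_of_nonneg_right
              (Real.rpow_le_rpow (by linarith) hta (by linarith)) (by linarith)) hb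
      _ = b * (δ ^ (r + 1) / (r + 1)) := by ring
  linarith [hfarB, hnearB, hsplit.le, hsplit.ge]

/-- **Singular-kernel Gronwall inequality of Henry type.**
Let `T > 0`, `C ≥ 0`, `γ ≥ 0` and `β ∈ (0,1)`. Then there is a constant `M`,
depending only on `C`, `γ`, `β`, `T` (and not on `V`), such that every continuous
nonnegative `V : [0,T] → [0,∞)` satisfying
`V(t) ≤ C + C ∫₀ᵗ (t-s)^{-1/2} V(s) ds + C ∫₀ᵗ e^{γs} (t-s)^{β-1} V(s) ds`
on `[0,T]` is bounded by `M` on `[0,T]`. -/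
theorem henry_gronwall_bound
    (T C γ β : ℝ) (hT : 0 < T) (hC : 0 ≤ C) (hγ : 0 ≤ γ) (hβ : β ∈ Ioo (0:ℝ) 1) :
    ∃ M : ℝ, ∀ V : ℝ → ℝ, ContinuousOn V (Icc 0 T) →
      (∀ t ∈ Icc (0:ℝ) T, 0 ≤ V t) →
      (∀ t ∈ Icc (0:ℝ) T,
        V t ≤ C + C * (∫ s in (0:ℝ)..t, (t - s) ^ (-(1/2) : ℝ) * V s)
            + C * (∫ s in (0:ℝ)..t, Real.exp (γ * s) * (t - s) ^ (β - 1) * V s)) →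
      ∀ t ∈ Icc (0:ℝ) T, V t ≤ M := by
  obtain ⟨hβ0, hβ1⟩ := hβ
  set E := Real.exp (γ * T) with hE
  have hEpos : 0 < E := Real.exp_pos _
  -- choose δ
  set f : ℝ → ℝ := fun δ =>
    C * (δ ^ (-(1/2) + 1 : ℝ) / (-(1/2) + 1)) + C * E * (δ ^ (β - 1 + 1) / (β - 1 + 1)) with hf
  have hcont : ContinuousAt f 0 := by
    have c1 : ContinuousAt (fun δ : ℝ => δ ^ (-(1/2) + 1 : ℝ)) 0 :=
      Real.continuousAt_rpow_const 0 _ (Or.inr (by norm_num))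
    have c2 : ContinuousAt (fun δ : ℝ => δ ^ (β - 1 + 1)) 0 :=
      Real.continuousAt_rpow_const 0 _ (Or.inr (by linarith))
    exact (continuousAt_const.mul (c1.div_const _)).add
      (continuousAt_const.mul (c2.div_const _))
  have hf0 : f 0 = 0 := by
    rw [hf]
    simp only
    rw [Real.zero_rpow (show (-(1/2) + 1 : ℝ) ≠ 0 by norm_num),
      Real.zero_rpow (show (β - 1 + 1 : ℝ) ≠ 0 by intro h; apply hβ0.ne'; linarith)]
    ring
  have htend : Tendsto f (nhdsWithin 0 (Ioi 0)) (nhds 0) := by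
    have := hcont.tendsto; rw [hf0] at this
    exact this.mono_left nhdsWithin_le_nhds
  have hev : ∀ᶠ δ in nhdsWithin (0:ℝ) (Ioi 0), f δ < 1/2 :=
    htend.eventually_lt_const (by norm_num)
  have hevT : ∀ᶠ δ in nhdsWithin (0:ℝ) (Ioi 0), δ ∈ Ioo (0:ℝ) T :=
    Filter.eventually_of_mem (Ioo_mem_nhdsGT hT) fun x hx => hx
  obtain ⟨δ, hδS, hδ0, hδT⟩ := (hev.and hevT).exists
  -- constants
  set K : ℝ := C * (δ ^ (-(1/2) : ℝ) * T) + C * (δ ^ (β - 1) * E * T) with hK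
  have hK0 : 0 ≤ K := add_nonneg
    (mul_nonneg hC (mul_nonneg (Real.rpow_nonneg hδ0.le _) hT.le))
    (mul_nonneg hC (mul_nonneg (mul_nonneg (Real.rpow_nonneg hδ0.le _) hEpos.le) hT.le))
  set M : ℕ → ℝ := fun n => Nat.rec C (fun _ Mk => 2 * (C + K * Mk)) n with hM
  have hM0 : M 0 = C := rfl
  have hMs : ∀ k, M (k + 1) = 2 * (C + K * M k) := fun k => rfl
  have hMnn : ∀ k, 0 ≤ M k := by
    intro k; induction k with
    | zero => exact hC
    | succ k ih =>
      rw [hMs]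
      have : 0 ≤ K * M k := mul_nonneg hK0 ih
      linarith
  set n : ℕ := ⌈T / δ⌉₊ with hn
  have hnT : T ≤ n * δ := by
    rw [hn]
    exact (div_le_iff₀ hδ0).mp (Nat.le_ceil _)
  refine ⟨M n, ?_⟩
  intro V hVc hV0 hViq
  have key : ∀ k : ℕ, ∀ t ∈ Icc 0 (min (k * δ) T), V t ≤ M k := by
    intro k
    induction k with
    | zero =>
      intro t ht
      have h1 : min ((0:ℕ) * δ) T = 0 := by
        rw [Nat.cast_zero, zero_mul]; exact min_eq_left hT.le
      rw [h1] at ht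
      have ht0 : t = 0 := le_antisymm ht.2 ht.1
      have := hViq 0 ⟨le_rfl, hT.le⟩
      simp only [intervalIntegral.integral_same, mul_zero, add_zero] at this
      rw [ht0, hM0]; exact this
    | succ k ih =>
      intro t ht
      set R := min ((k + 1 : ℕ) * δ) T with hR
      have hR0 : 0 ≤ R := le_min (by positivity) hT.le
      have hRT : R ≤ T := min_le_right _ _
      have hIcc : Icc (0:ℝ) R ⊆ Icc 0 T := Icc_subset_Icc le_rfl hRT
      obtain ⟨x, hxI, hxmax⟩ := (isCompact_Icc).exists_isMaxOn (nonempty_Icc.mpr hR0)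
        (hVc.mono hIcc)
      have hVtx : V t ≤ V x := hxmax ht
      have hx0 : 0 ≤ x := hxI.1
      have hxT : x ≤ T := (hIcc hxI).2
      have hxR : x ≤ R := hxI.2
      -- far region contained in induction interval
      have hfarsub : ∀ s ∈ Icc (0:ℝ) (max (x - δ) 0), s ∈ Icc 0 (min (k * δ) T) := by
        intro s hs
        have h1 : max (x - δ) 0 ≤ (k : ℝ) * δ := by
          apply max_le _ (by positivity)
          have : x ≤ (k + 1 : ℕ) * δ := hxR.trans (min_le_left _ _)
          push_cast at this ⊢
          linarith
        have h2 : max (x - δ) 0 ≤ x := max_le (by linarith) hx0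
        exact ⟨hs.1, le_min (hs.2.trans h1) ((hs.2.trans h2).trans hxT)⟩
      have hVfar : ∀ s ∈ Icc (0:ℝ) (max (x - δ) 0), V s ≤ M k := fun s hs =>
        ih s (hfarsub s hs)
      have hVnear : ∀ s ∈ Icc (0:ℝ) x, V s ≤ V x := fun s hs =>
        hxmax ⟨hs.1, hs.2.trans hxR⟩
      have hV0x : ∀ s ∈ Icc (0:ℝ) x, 0 ≤ V s := fun s hs =>
        hV0 s ⟨hs.1, hs.2.trans hxT⟩
      have hVcx : ContinuousOn V (Icc 0 x) := hVc.mono (Icc_subset_Icc le_rfl hxT)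
      -- first kernel estimate
      have est1 : (∫ s in (0:ℝ)..x, (x - s) ^ (-(1/2) : ℝ) * V s)
          ≤ δ ^ (-(1/2) : ℝ) * M k * T
            + V x * (δ ^ (-(1/2) + 1 : ℝ) / (-(1/2) + 1)) :=
        kernel_est (by norm_num) (by norm_num) hδ0 hx0 hxT hVcx hV0x hVfar hVnear (hMnn k)
      -- second kernel
      have hg2c : ContinuousOn (fun s => Real.exp (γ * s) * V s) (Icc 0 x) :=
        ((Real.continuous_exp.comp (continuous_const.mul continuous_id)).continuousOn).mul hVcx
      have hexple : ∀ s ∈ Icc (0:ℝ) x, Real.exp (γ * s) ≤ E := by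
        intro s hs
        exact Real.exp_le_exp.mpr (mul_le_mul_of_nonneg_left (hs.2.trans hxT) hγ)
      have hg20 : ∀ s ∈ Icc (0:ℝ) x, 0 ≤ Real.exp (γ * s) * V s := fun s hs =>
        mul_nonneg (Real.exp_pos _).le (hV0x s hs)
      have hg2far : ∀ s ∈ Icc (0:ℝ) (max (x - δ) 0), Real.exp (γ * s) * V s ≤ E * M k := by
        intro s hs
        have hsx : s ∈ Icc (0:ℝ) x :=
          ⟨hs.1, hs.2.trans (max_le (by linarith) hx0)⟩
        exact mul_le_mul (hexple s hsx) (hVfar s hs) (hV0x s hsx) hEpos.le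
      have hg2near : ∀ s ∈ Icc (0:ℝ) x, Real.exp (γ * s) * V s ≤ E * V x := fun s hs =>
        mul_le_mul (hexple s hs) (hVnear s hs) (hV0x s hs) hEpos.le
      have est2 : (∫ s in (0:ℝ)..x, (x - s) ^ (β - 1) * (Real.exp (γ * s) * V s))
          ≤ δ ^ (β - 1) * (E * M k) * T
            + E * V x * (δ ^ (β - 1 + 1) / (β - 1 + 1)) :=
        kernel_est (by linarith) (by linarith) hδ0 hx0 hxT hg2c hg20 hg2far hg2near
          (mul_nonneg hEpos.le (hMnn k))
      -- rearrange second integral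
      have hre : (∫ s in (0:ℝ)..x, Real.exp (γ * s) * (x - s) ^ (β - 1) * V s)
          = ∫ s in (0:ℝ)..x, (x - s) ^ (β - 1) * (Real.exp (γ * s) * V s) := by
        apply intervalIntegral.integral_congr
        intro s _
        ring
      have hIq := hViq x ⟨hx0, hxT⟩
      rw [hre] at hIq
      have hVx0 : 0 ≤ V x := hV0 x ⟨hx0, hxT⟩
      have hb1 : C * (∫ s in (0:ℝ)..x, (x - s) ^ (-(1/2) : ℝ) * V s)
          ≤ C * (δ ^ (-(1/2) : ℝ) * M k * T
            + V x * (δ ^ (-(1/2) + 1 : ℝ) / (-(1/2) + 1))) :=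
        mul_le_mul_of_nonneg_left est1 hC
      have hb2 : C * (∫ s in (0:ℝ)..x, (x - s) ^ (β - 1) * (Real.exp (γ * s) * V s))
          ≤ C * (δ ^ (β - 1) * (E * M k) * T
            + E * V x * (δ ^ (β - 1 + 1) / (β - 1 + 1))) :=
        mul_le_mul_of_nonneg_left est2 hC
      have hmul := mul_le_mul_of_nonneg_right hδS.le hVx0
      rw [hf] at hmul
      simp only at hmul
      have hVxb : V x ≤ M (k + 1) := by
        rw [hMs, hK]
        nlinarith [hIq, hb1, hb2, hmul, mul_nonneg hK0 (hMnn k)]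
      exact hVtx.trans hVxb
  intro t ht
  have : min ((n : ℝ) * δ) T = T := min_eq_right hnT
  exact key n t (by rw [this]; exact ht)
end
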